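/- One-step L² contraction of the Euler scheme: let b : ℝ^d → ℝ^d and ρ : ℝ^d → (d×d matrices) be measurable, let δt > 0, let Y be a standard Gaussian random vector in ℝ^d, and for x ∈ ℝ^d set X₁(x) := x + b(x)δt + √(2δt) ρ(x) Y. Then for all x, y ∈ ℝ^d, E‖X₁(x) − X₁(y)‖² = ‖x−y‖² + 2δt ⟨x−y, b(x)−b(y)⟩ + 2δt ‖ρ(x) − ρ(y)‖²_HS + δt² ‖b(x)−b(y)‖². Consequently, if there exists α > 0 such that ‖ρ(x) − ρ(y)‖²_HS + ⟨x−y, b(x)−b(y)⟩ ≤ −α‖x−y‖² for all x,y, and b is L-Lipschitz, then E‖X₁(x) − X₁(y)‖² ≤ (1 − 2αδt + L²δt²) ‖x−y‖² for all x, y ∈ ℝ^d. -/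

import Mathlib

open MeasureTheory ProbabilityTheory

noncomputable section

/-- Squared Hilbert–Schmidt (Frobenius) norm `‖A‖²_HS = tr(AAᵀ) = ∑_{i,j} A_{ij}²`. -/
def hsNormSq {d : ℕ} (A : Matrix (Fin d) (Fin d) ℝ) : ℝ :=
  ∑ i : Fin d, ∑ j : Fin d, A i j ^ 2

/-- The standard Gaussian measure on `ℝ^d`: i.i.d. standard normal coordinates. -/
def stdGaussian (d : ℕ) : Measure (Fin d → ℝ) :=
  Measure.pi fun _ => gaussianReal 0 1

/-- One step of the Euler scheme: `X₁(x) = x + b(x)δt + √(2δt) ρ(x) Y`,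
as a function of the Gaussian input `y`. -/
def eulerStep {d : ℕ} (b : (Fin d → ℝ) → Fin d → ℝ)
    (ρ : (Fin d → ℝ) → Matrix (Fin d) (Fin d) ℝ) (δt : ℝ)
    (x : Fin d → ℝ) (y : Fin d → ℝ) : Fin d → ℝ :=
  fun i => x i + b x i * δt + Real.sqrt (2 * δt) * (ρ x).mulVec y i

/-! The difference `X₁(x) − X₁(y)` is `c + √(2δt) M Y` with the deterministic vector
`c = x − y + δt (b(x) − b(y))` and `M = ρ(x) − ρ(y)`. Each coordinate `(M Y)ₖ = Mₖ ⬝ᵥ Y` is a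
centred sum of independent terms, so its variance is `∑ᵢ Mₖᵢ²`, and the second moment of the
`k`-th coordinate is `cₖ² + 2δt ∑ᵢ Mₖᵢ²`. Summing over `k` gives the identity; the contraction
bound follows by inserting the stability condition and the Lipschitz bound into it. -/

open Matrix

namespace ProbabilityTheory

variable {Ω : Type*} {mΩ : MeasurableSpace Ω} {μ : Measure Ω} [IsProbabilityMeasure μ]

lemma integral_const_add_mul_sq {Z : Ω → ℝ} (hZ : MemLp Z 2 μ) (hZ₀ : μ[Z] = 0) (c s : ℝ) :
    ∫ ω, (c + s * Z ω) ^ 2 ∂μ = c ^ 2 + s ^ 2 * Var[Z; μ] := by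
  have hX : MemLp (fun ω => c + s * Z ω) 2 μ := (memLp_const c).add (hZ.const_mul s)
  have hmean : ∫ ω, c + s * Z ω ∂μ = c := by
    rw [integral_add (integrable_const c) ((hZ.integrable one_le_two).const_mul s),
      integral_const_mul, hZ₀]
    simp
  have hvar : Var[fun ω => c + s * Z ω; μ] = s ^ 2 * Var[Z; μ] := by
    rw [variance_const_add ((hZ.const_mul s).aestronglyMeasurable), variance_const_mul]
  have hsecond := variance_eq_sub hX
  rw [hvar, hmean] at hsecond
  simp only [Pi.pow_apply] at hsecond
  linarith

end ProbabilityTheory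

section

variable {ι : Type*} [Fintype ι] {ν : ι → Measure ℝ} [∀ i, IsProbabilityMeasure (ν i)]

lemma memLp_dotProduct_pi (hν : ∀ i, MemLp id 2 (ν i)) (m : ι → ℝ) :
    MemLp (fun w => m ⬝ᵥ w) 2 (Measure.pi ν) :=
  memLp_finsetSum _ fun i _ =>
    ((hν i).comp_measurePreserving (measurePreserving_eval ν i)).const_mul (m i)

lemma integral_dotProduct_pi (hν : ∀ i, Integrable id (ν i)) (m : ι → ℝ) :
    ∫ w, m ⬝ᵥ w ∂Measure.pi ν = ∑ i, m i * ∫ x, x ∂ν i := by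
  simp only [dotProduct]
  rw [integral_finsetSum _ fun i _ => (integrable_eval (hν i)).const_mul (m i)]
  simp_rw [integral_const_mul, integral_eval]

lemma variance_dotProduct_pi (hν : ∀ i, MemLp id 2 (ν i)) (m : ι → ℝ) :
    Var[fun w => m ⬝ᵥ w; Measure.pi ν] = ∑ i, m i ^ 2 * Var[fun x => x; ν i] := by
  calc Var[fun w => m ⬝ᵥ w; Measure.pi ν]
      = Var[∑ i, fun w => m i * w i; Measure.pi ν] := by
        congr 1
        ext w
        simp [dotProduct]
    _ = ∑ i, Var[fun x => m i * x; ν i] :=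
        variance_sum_pi (X := fun i x => m i * x) fun i => (hν i).const_mul (m i)
    _ = ∑ i, m i ^ 2 * Var[fun x => x; ν i] :=
        Finset.sum_congr rfl fun i _ => variance_const_mul (m i) (fun x => x) (ν i)

lemma integral_sum_sq_const_add_mulVec_pi {κ : Type*} [Fintype κ] (hν : ∀ i, MemLp id 2 (ν i))
    (hmean : ∀ i, ∫ x, x ∂ν i = 0) (hvar : ∀ i, Var[fun x => x; ν i] = 1)
    (c : κ → ℝ) (s : ℝ) (M : Matrix κ ι ℝ) :
    ∫ w, ∑ k, (c k + s * (M *ᵥ w) k) ^ 2 ∂Measure.pi ν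
      = ∑ k, c k ^ 2 + s ^ 2 * ∑ k, ∑ i, M k i ^ 2 := by
  have hrow : ∀ k, ∫ w, (c k + s * (M k ⬝ᵥ w)) ^ 2 ∂Measure.pi ν
      = c k ^ 2 + s ^ 2 * ∑ i, M k i ^ 2 := fun k => by
    have hmean_row : ∫ w, M k ⬝ᵥ w ∂Measure.pi ν = 0 := by
      simp [integral_dotProduct_pi (fun i => (hν i).integrable one_le_two), hmean]
    rw [integral_const_add_mul_sq (memLp_dotProduct_pi hν _) hmean_row,
      variance_dotProduct_pi hν]
    simp [hvar]
  change ∫ w, ∑ k, (c k + s * (M k ⬝ᵥ w)) ^ 2 ∂Measure.pi ν = _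
  have hint : ∀ k, Integrable (fun w => (c k + s * (M k ⬝ᵥ w)) ^ 2) (Measure.pi ν) := fun k =>
    ((memLp_const (c k)).add ((memLp_dotProduct_pi hν (M k)).const_mul s)).integrable_sq
  rw [integral_finsetSum _ fun k _ => hint k]
  simp only [hrow, Finset.sum_add_distrib, Finset.mul_sum]

end

instance (d : ℕ) : IsProbabilityMeasure (stdGaussian d) := by
  unfold _root_.stdGaussian
  infer_instance

lemma integral_sum_sq_const_add_mulVec_stdGaussian {d : ℕ} (c : Fin d → ℝ) (s : ℝ)
    (M : Matrix (Fin d) (Fin d) ℝ) :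
    ∫ w, ∑ i, (c i + s * (M *ᵥ w) i) ^ 2 ∂stdGaussian d = ∑ i, c i ^ 2 + s ^ 2 * hsNormSq M :=
  integral_sum_sq_const_add_mulVec_pi (fun _ => memLp_id_gaussianReal 2)
    (fun _ => integral_id_gaussianReal) (fun _ => by simp) c s M

lemma eulerStep_sub_eulerStep {d : ℕ} (b : (Fin d → ℝ) → Fin d → ℝ)
    (ρ : (Fin d → ℝ) → Matrix (Fin d) (Fin d) ℝ) (δt : ℝ) (x y w : Fin d → ℝ) (i : Fin d) :
    eulerStep b ρ δt x w i - eulerStep b ρ δt y w i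
      = (x i - y i + (b x i - b y i) * δt) + √(2 * δt) * ((ρ x - ρ y) *ᵥ w) i := by
  simp only [eulerStep, sub_mulVec, Pi.sub_apply]
  ring

lemma integral_sum_sq_eulerStep_sub {d : ℕ} (b : (Fin d → ℝ) → Fin d → ℝ)
    (ρ : (Fin d → ℝ) → Matrix (Fin d) (Fin d) ℝ) {δt : ℝ} (hδt : 0 ≤ δt) (x y : Fin d → ℝ) :
    ∫ w, ∑ i, (eulerStep b ρ δt x w i - eulerStep b ρ δt y w i) ^ 2 ∂stdGaussian d
      = ∑ i, (x i - y i) ^ 2 + 2 * δt * ∑ i, (x i - y i) * (b x i - b y i)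
        + 2 * δt * hsNormSq (ρ x - ρ y) + δt ^ 2 * ∑ i, (b x i - b y i) ^ 2 := by
  simp only [eulerStep_sub_eulerStep, integral_sum_sq_const_add_mulVec_stdGaussian,
    Real.sq_sqrt (by positivity : (0 : ℝ) ≤ 2 * δt)]
  have hexpand : ∀ i, (x i - y i + (b x i - b y i) * δt) ^ 2 = (x i - y i) ^ 2
      + 2 * δt * ((x i - y i) * (b x i - b y i)) + δt ^ 2 * (b x i - b y i) ^ 2 := fun i => by
    ring
  simp only [hexpand, Finset.sum_add_distrib, ← Finset.mul_sum]
  ring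

theorem euler_scheme_one_step_contraction_general {d : ℕ}
    (b : (Fin d → ℝ) → Fin d → ℝ)
    (ρ : (Fin d → ℝ) → Matrix (Fin d) (Fin d) ℝ)
    (δt : ℝ) (hδt : 0 < δt) :
    (∀ x y : Fin d → ℝ,
      (∫ w, ∑ i : Fin d, (eulerStep b ρ δt x w i - eulerStep b ρ δt y w i) ^ 2
          ∂(stdGaussian d))
        = (∑ i : Fin d, (x i - y i) ^ 2)
          + 2 * δt * (∑ i : Fin d, (x i - y i) * (b x i - b y i))
          + 2 * δt * hsNormSq (ρ x - ρ y)
          + δt ^ 2 * ∑ i : Fin d, (b x i - b y i) ^ 2) ∧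
    (∀ α L : ℝ, 0 < α →
      (∀ x y : Fin d → ℝ,
        hsNormSq (ρ x - ρ y) + (∑ i : Fin d, (x i - y i) * (b x i - b y i))
          ≤ -α * ∑ i : Fin d, (x i - y i) ^ 2) →
      (∀ x y : Fin d → ℝ,
        Real.sqrt (∑ i : Fin d, (b x i - b y i) ^ 2)
          ≤ L * Real.sqrt (∑ i : Fin d, (x i - y i) ^ 2)) →
      ∀ x y : Fin d → ℝ,
        (∫ w, ∑ i : Fin d, (eulerStep b ρ δt x w i - eulerStep b ρ δt y w i) ^ 2
            ∂(stdGaussian d))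
          ≤ (1 - 2 * α * δt + L ^ 2 * δt ^ 2) * ∑ i : Fin d, (x i - y i) ^ 2) := by
  have hmoment := integral_sum_sq_eulerStep_sub b ρ hδt.le
  refine ⟨hmoment, fun α L _ hstab hlip x y => ?_⟩
  have hlip_sq : ∑ i, (b x i - b y i) ^ 2 ≤ L ^ 2 * ∑ i, (x i - y i) ^ 2 := by
    have := (Real.sqrt_le_iff.1 (hlip x y)).2
    rwa [mul_pow, Real.sq_sqrt (by positivity)] at this
  rw [hmoment x y]
  linarith [mul_le_mul_of_nonneg_left (hstab x y) (by positivity : (0 : ℝ) ≤ 2 * δt),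
    mul_le_mul_of_nonneg_left hlip_sq (sq_nonneg δt)]

/-- **One-step L² contraction of the Euler scheme** (proof of Corollary 2 in
Joulin–Ollivier): for a standard Gaussian input,
`E‖X₁(x) − X₁(y)‖² = ‖x−y‖² + 2δt⟨x−y, b(x)−b(y)⟩ + 2δt‖ρ(x)−ρ(y)‖²_HS +
δt²‖b(x)−b(y)‖²`; consequently under the stability condition (C) with constant `α > 0`
and `b` `L`-Lipschitz, `E‖X₁(x) − X₁(y)‖² ≤ (1 − 2αδt + L²δt²)‖x−y‖²`. -/
theorem euler_scheme_one_step_contraction {d : ℕ}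
    (b : (Fin d → ℝ) → Fin d → ℝ) (hb : Measurable b)
    (ρ : (Fin d → ℝ) → Matrix (Fin d) (Fin d) ℝ) (hρ : ∀ i j : Fin d, Measurable fun x => ρ x i j)
    (δt : ℝ) (hδt : 0 < δt) :
    (∀ x y : Fin d → ℝ,
      (∫ w, ∑ i : Fin d, (eulerStep b ρ δt x w i - eulerStep b ρ δt y w i) ^ 2
          ∂(stdGaussian d))
        = (∑ i : Fin d, (x i - y i) ^ 2)
          + 2 * δt * (∑ i : Fin d, (x i - y i) * (b x i - b y i))
          + 2 * δt * hsNormSq (ρ x - ρ y)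
          + δt ^ 2 * ∑ i : Fin d, (b x i - b y i) ^ 2) ∧
    (∀ α L : ℝ, 0 < α →
      (∀ x y : Fin d → ℝ,
        hsNormSq (ρ x - ρ y) + (∑ i : Fin d, (x i - y i) * (b x i - b y i))
          ≤ -α * ∑ i : Fin d, (x i - y i) ^ 2) →
      (∀ x y : Fin d → ℝ,
        Real.sqrt (∑ i : Fin d, (b x i - b y i) ^ 2)
          ≤ L * Real.sqrt (∑ i : Fin d, (x i - y i) ^ 2)) →
      ∀ x y : Fin d → ℝ,
        (∫ w, ∑ i : Fin d, (eulerStep b ρ δt x w i - eulerStep b ρ δt y w i) ^ 2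
            ∂(stdGaussian d))
          ≤ (1 - 2 * α * δt + L ^ 2 * δt ^ 2) * ∑ i : Fin d, (x i - y i) ^ 2) :=
  euler_scheme_one_step_contraction_general b ρ δt hδt

end
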